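/- arXiv:2410.11460 — 5 statements merged into one kernel-verified Lean document; each statement's English description precedes it below -/
import Mathlib

section
/- If an isotropic system of vectors is given, i.e., vectors v_1,...,v_k in R^n satisfy ∑_{i=1}^k v_i ⊗ v_i = Id_n, then there exist indices 1 ≤ i_1 < ... < i_n ≤ k such that det[v_{i_1},...,v_{i_n}]^2 ≥ 1/binomial(k,n). -/
/-!
Cauchy–Binet expresses `det (V * Vᵀ)` as the sum of the squares of the maximal minors of `V`.
For the matrix `V` whose columns are the `v i`, isotropy says `V * Vᵀ = 1`, so these
`k.choose n` nonnegative squares sum to `1` and one of them is at least their average.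
-/

open Matrix Finset Equiv Function

namespace Finset

variable {ι : Type*} [LinearOrder ι] {n : ℕ}

theorem range_orderEmbOfFin_comp_perm (s : Finset ι) (h : s.card = n) (σ : Perm (Fin n)) :
    Set.range (s.orderEmbOfFin h ∘ σ) = s := by
  rw [EquivLike.range_comp, range_orderEmbOfFin]

theorem exists_perm_orderEmbOfFin_comp_eq (s : Finset ι) (h : s.card = n)
    {p : Fin n → ι} (hp : Injective p) (hps : ∀ i, p i ∈ s) :
    ∃ σ : Perm (Fin n), s.orderEmbOfFin h ∘ σ = p := by
  have hrange : ∀ i, p i ∈ Set.range (s.orderEmbOfFin h) := by simpa using hps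
  choose τ hτ using hrange
  have hτ_inj : Injective τ := fun i j hij => hp (by rw [← hτ i, ← hτ j, hij])
  exact ⟨Equiv.ofBijective τ (Finite.injective_iff_bijective.1 hτ_inj), funext hτ⟩

/-- Every injective `p : Fin n → ι` is uniquely the increasing enumeration of its range,
precomposed with a permutation. -/
theorem sum_filter_injective_eq_sum_orderEmbOfFin_comp_perm [Fintype ι] {M : Type*}
    [AddCommMonoid M] (f : (Fin n → ι) → M) :
    ∑ p with Injective p, f p =
      ∑ s : {s : Finset ι // s.card = n}, ∑ σ : Perm (Fin n), f (s.1.orderEmbOfFin s.2 ∘ σ) := by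
  rw [← Fintype.sum_prod_type']
  symm
  refine sum_nbij (fun x => x.1.1.orderEmbOfFin x.1.2 ∘ x.2) (fun x _ => ?_) ?_ ?_ fun _ _ => rfl
  · simpa using (x.1.1.orderEmbOfFin x.1.2).injective.comp x.2.injective
  · rintro ⟨⟨s, hs⟩, σ⟩ - ⟨⟨t, ht⟩, τ⟩ - heq
    have hst : s = t := by
      simpa using (range_orderEmbOfFin_comp_perm s hs σ).symm.trans
        ((congrArg Set.range heq).trans (range_orderEmbOfFin_comp_perm t ht τ))
    subst hst
    have hστ : σ = τ := Equiv.ext fun i => (s.orderEmbOfFin hs).injective (congrFun heq i)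
    rw [hστ]
  · intro p hp
    have hp : Injective p := by simpa using hp
    have hcard : (univ.image p).card = n := by
      rw [card_image_of_injective _ hp, card_univ, Fintype.card_fin]
    obtain ⟨σ, hσ⟩ :=
      exists_perm_orderEmbOfFin_comp_eq _ hcard hp fun i => mem_image_of_mem p (mem_univ i)
    exact ⟨(⟨_, hcard⟩, σ), mem_univ _, hσ⟩

end Finset

namespace Matrix

variable {R ι m : Type*} [CommRing R] [Fintype m] [DecidableEq m] {n : ℕ}

theorem det_mul_eq_sum_prod_mul_det_submatrix [Fintype ι] (A : Matrix m ι R)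
    (B : Matrix ι m R) :
    det (A * B) = ∑ p : m → ι, (∏ i, B (p i) i) * det (A.submatrix id p) := by
  simp only [det_apply', mul_apply, prod_univ_sum, Fintype.piFinset_univ, mul_sum,
    submatrix_apply, id, prod_mul_distrib]
  rw [sum_comm]
  exact sum_congr rfl fun p _ => sum_congr rfl fun σ _ => by ring

theorem det_submatrix_eq_zero_of_not_injective (A : Matrix m ι R) {p : m → ι}
    (hp : ¬ Injective p) : det (A.submatrix id p) = 0 := by
  obtain ⟨i, j, hij, hne⟩ : ∃ i j, p i = p j ∧ i ≠ j := by simpa [Injective] using hp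
  exact det_zero_of_column_eq hne fun r => by simp [hij]

theorem sum_perm_prod_mul_det_submatrix_comp (A : Matrix (Fin n) ι R) (B : Matrix ι (Fin n) R)
    (e : Fin n → ι) :
    ∑ σ : Perm (Fin n), (∏ i, B (e (σ i)) i) * det (A.submatrix id (e ∘ σ)) =
      det (A.submatrix id e) * det (B.submatrix e id) := by
  have hperm (σ : Perm (Fin n)) :
      A.submatrix id (e ∘ σ) = (A.submatrix id e).submatrix id σ := rfl
  simp only [hperm, det_permute', det_apply' (B.submatrix e id), submatrix_apply, id, mul_sum]
  exact sum_congr rfl fun σ _ => by ring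

/-- The Cauchy–Binet formula. -/
theorem det_mul_eq_sum_det_submatrix_mul_det_submatrix [Fintype ι] [LinearOrder ι]
    (A : Matrix (Fin n) ι R) (B : Matrix ι (Fin n) R) :
    det (A * B) = ∑ s : {s : Finset ι // s.card = n},
      det (A.submatrix id (s.1.orderEmbOfFin s.2)) *
        det (B.submatrix (s.1.orderEmbOfFin s.2) id) := by
  rw [det_mul_eq_sum_prod_mul_det_submatrix, ← sum_filter_of_ne (p := Injective) fun p _ hp => ?_,
    sum_filter_injective_eq_sum_orderEmbOfFin_comp_perm]
  · exact sum_congr rfl fun s _ => sum_perm_prod_mul_det_submatrix_comp A B _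
  · by_contra hinj
    exact hp (by rw [det_submatrix_eq_zero_of_not_injective A hinj, mul_zero])

theorem det_mul_transpose_eq_sum_sq_det_submatrix [Fintype ι] [LinearOrder ι]
    (A : Matrix (Fin n) ι R) :
    det (A * Aᵀ) = ∑ s : {s : Finset ι // s.card = n},
      det (A.submatrix id (s.1.orderEmbOfFin s.2)) ^ 2 := by
  simp only [det_mul_eq_sum_det_submatrix_mul_det_submatrix, ← transpose_submatrix,
    det_transpose, sq]

end Matrix

theorem exists_one_div_card_le_of_sum_eq_one {α K : Type*} [Fintype α] [Field K] [LinearOrder K]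
    [IsStrictOrderedRing K] {f : α → K} (hf : ∑ a, f a = 1) :
    ∃ a, 1 / (Fintype.card α : K) ≤ f a := by
  have hne : (univ : Finset α).Nonempty := nonempty_of_sum_ne_zero (hf.trans_ne one_ne_zero)
  have hcard : (Fintype.card α : K) ≠ 0 := by
    rw [← card_univ]
    exact_mod_cast hne.card_pos.ne'
  obtain ⟨a, -, ha⟩ := exists_le_of_sum_le hne (f := fun _ => 1 / (Fintype.card α : K)) (by
    rw [hf, sum_const, card_univ, nsmul_eq_mul, mul_one_div_cancel hcard])
  exact ⟨a, ha⟩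

/-- If vectors `v 1, ..., v k` in `ℝ^n` satisfy `∑ i, v i ⊗ v i = Id_n`, then there exist
indices `i_1 < ... < i_n` such that the square of the determinant of the matrix with columns
`v i_1, ..., v i_n` is at least `1 / (k.choose n)`. -/
theorem cauchy_binet_large_subdeterminant (n k : ℕ) (v : Fin k → Fin n → ℝ)
    (hiso : ∑ i, vecMulVec (v i) (v i) = (1 : Matrix (Fin n) (Fin n) ℝ)) :
    ∃ s : Fin n → Fin k, StrictMono s ∧
      (1 : ℝ) / (k.choose n) ≤ (Matrix.det (Matrix.of fun a b => v (s b) a)) ^ 2 := by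
  set V : Matrix (Fin n) (Fin k) ℝ := .of fun a i => v i a
  have hV : V * Vᵀ = 1 := by
    rw [← hiso]
    ext a b
    simp [V, mul_apply, Matrix.sum_apply, vecMulVec_apply]
  have hsum : ∑ s : {s : Finset (Fin k) // s.card = n},
      det (V.submatrix id (s.1.orderEmbOfFin s.2)) ^ 2 = 1 := by
    rw [← det_mul_transpose_eq_sum_sq_det_submatrix, hV, det_one]
  obtain ⟨s, hs⟩ := exists_one_div_card_le_of_sum_eq_one hsum
  rw [Fintype.card_finset_len, Fintype.card_fin] at hs
  exact ⟨_, (s.1.orderEmbOfFin s.2).strictMono, hs⟩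
end

section
/- Let R > 0 and let K ⊆ C ⊆ R·B^n_2 be origin-symmetric convex bodies in R^n, n ≥ 2. Then ℓ(K) − ℓ(C) ≥ (n/(2πe))^{n/2} R^{-(n+1)} V(C \ K), where ℓ(K) = ∫_{R^n} ‖x‖_K dγ_n(x) is the Gaussian ℓ-norm, ‖·‖_K is the Minkowski gauge of K, and V denotes Lebesgue volume. -/
/-!
By the layer-cake formula, `ℓ(K) - ℓ(C) = ∫₀^∞ γₙ({‖·‖_K ≥ t} \ {‖·‖_C > t}) dt`, and the set
under the integral contains `t • (C \ K)`. That set has volume `tⁿ V(C \ K)` and lies in the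
ball of radius `R t`, where the Gaussian density is at least `(2π)^{-n/2} e^{-R²t²/2}`. Hence
`ℓ(K) - ℓ(C) ≥ (2π)^{-n/2} V(C \ K) ∫₀^∞ tⁿ e^{-R²t²/2} dt
  = (2π)^{-n/2} R^{-(n+1)} V(C \ K) ∫₀^∞ uⁿ e^{-u²/2} du`.

The last integral is at least `(n/e)^{n/2}`; instead of Stirling's bound for `Γ` this is proved
directly. With `s = √n` the integrand `uⁿ e^{-u²/2}` peaks at `s` with value `(n/e)^{n/2}`,
dominates `(n/e)^{n/2} e^{-(u-s)²}` on `[s, ∞)` and `(n/e)^{n/2} e^{-5/8}` on `[s - 1/2, s]`,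
and `√π / 2 + e^{-5/8} / 2 ≥ 1`.
-/

open MeasureTheory

/-- The standard Gaussian measure on `ℝ^n`. -/
noncomputable def gaussianMeasure (n : ℕ) : Measure (EuclideanSpace ℝ (Fin n)) :=
  volume.withDensity
    (fun x => ENNReal.ofReal ((2 * Real.pi) ^ (-(n : ℝ) / 2) * Real.exp (-‖x‖ ^ 2 / 2)))

/-- The Gaussian ℓ-norm of a convex body: `ℓ(K) = ∫ ‖x‖_K dγ_n(x)`, where `‖·‖_K` is the
Minkowski gauge of `K`. -/
noncomputable def ellNorm {n : ℕ} (K : Set (EuclideanSpace ℝ (Fin n))) : ℝ :=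
  ∫ x, gauge K x ∂(gaussianMeasure n)

open Set Real Filter Topology
open scoped ENNReal Pointwise

lemma le_sq_mul_log_div_of_le {s u : ℝ} (hs : 0 < s) (hsu : s ≤ u) :
    (u ^ 2 - s ^ 2) / 2 - (u - s) ^ 2 ≤ s ^ 2 * log (u / s) := by
  set x := (u - s) / s with hx
  have hx0 : 0 ≤ x := div_nonneg (by linarith) hs.le
  have hux : u / s = 1 + x := by rw [hx]; field_simp; ring
  have hlog : x - x ^ 2 / 2 ≤ log (1 + x) := by
    refine le_trans ?_ (le_log_one_add_of_nonneg hx0)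
    rw [le_div_iff₀ (by linarith)]
    nlinarith [pow_nonneg hx0 3]
  have hu : u = s * (1 + x) := by rw [← hux]; field_simp
  rw [hux]
  calc (u ^ 2 - s ^ 2) / 2 - (u - s) ^ 2 = s ^ 2 * (x - x ^ 2 / 2) := by rw [hu]; ring
    _ ≤ s ^ 2 * log (1 + x) := by gcongr

lemma le_sq_mul_log_div_of_sub_half_le {s u : ℝ} (hs : 1 ≤ s) (hu : s - 1 / 2 ≤ u) (hus : u ≤ s) :
    (u ^ 2 - s ^ 2) / 2 - 5 / 8 ≤ s ^ 2 * log (u / s) := by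
  have hu0 : 0 < u := by linarith
  have hlog : 1 - s / u ≤ log (u / s) := by
    simpa using one_sub_inv_le_log_of_pos (div_pos hu0 (by linarith : (0 : ℝ) < s))
  -- what remains is `(s - u)² (1 / 2 + s / u) ≤ 5 / 8`, and `s / u ≤ 2`
  refine le_trans ?_ (mul_le_mul_of_nonneg_left hlog (sq_nonneg s))
  rw [mul_sub, mul_one, ← mul_div_assoc, le_sub_iff_add_le, ← le_sub_iff_add_le',
    div_le_iff₀ hu0]
  nlinarith [mul_nonneg (sub_nonneg.2 hus) (sub_nonneg.2 hus),
    mul_nonneg (sub_nonneg.2 hus) (by linarith : (0 : ℝ) ≤ 2 * u - s)]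

lemma rpow_mul_exp_neg_sq_div_two_eq_exp {p u : ℝ} (hu : 0 < u) :
    u ^ p * exp (-u ^ 2 / 2) = exp (p * log u - u ^ 2 / 2) := by
  rw [rpow_def_of_pos hu, ← exp_add, mul_comm, sub_eq_add_neg, neg_div]

lemma sq_div_exp_one_rpow_eq_exp {s : ℝ} (hs : 0 < s) :
    (s ^ 2 / exp 1) ^ (s ^ 2 / 2) = exp (s ^ 2 * log s - s ^ 2 / 2) := by
  rw [rpow_def_of_pos (by positivity), log_div (by positivity) (exp_pos 1).ne', log_exp, log_pow]
  ring_nf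

lemma mul_exp_le_rpow_mul_exp_neg_sq_div_two {s u c : ℝ} (hs : 0 < s) (hu : 0 < u)
    (h : (u ^ 2 - s ^ 2) / 2 - c ≤ s ^ 2 * log (u / s)) :
    (s ^ 2 / exp 1) ^ (s ^ 2 / 2) * exp (-c) ≤ u ^ (s ^ 2) * exp (-u ^ 2 / 2) := by
  rw [sq_div_exp_one_rpow_eq_exp hs, rpow_mul_exp_neg_sq_div_two_eq_exp hu, ← exp_add, exp_le_exp]
  rw [log_div hu.ne' hs.ne'] at h
  linarith

lemma integral_Ioi_exp_neg_sq_sub (s : ℝ) : ∫ u in Ioi s, exp (-(u - s) ^ 2) = √π / 2 := by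
  have h := (measurePreserving_sub_right volume s).setIntegral_preimage_emb
    (measurableEmbedding_subRight s) (fun u => exp (-u ^ 2)) (Ioi 0)
  have hg := integral_gaussian_Ioi 1
  rw [preimage_sub_const_Ioi, zero_add] at h
  simp only [neg_one_mul, div_one] at hg
  rw [h, hg]

lemma integrableOn_rpow_mul_exp_neg_mul_sq_div_two {p R : ℝ} (hp : -1 < p) (hR : R ≠ 0) :
    IntegrableOn (fun t => t ^ p * exp (-(R * t) ^ 2 / 2)) (Ioi 0) := by
  refine (integrableOn_rpow_mul_exp_neg_mul_sq (b := R ^ 2 / 2) (by positivity) hp).congr_fun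
    (fun u _ => ?_) measurableSet_Ioi
  ring_nf

lemma rpow_div_exp_le_integral_rpow_mul_exp {p : ℝ} (hp : 1 ≤ p) :
    (p / exp 1) ^ (p / 2) ≤ ∫ u in Ioi 0, u ^ p * exp (-u ^ 2 / 2) := by
  obtain ⟨s, hs1, rfl⟩ : ∃ s, 1 ≤ s ∧ s ^ 2 = p :=
    ⟨√p, one_le_sqrt.2 hp, sq_sqrt (by linarith)⟩
  have hs : 0 < s := by linarith
  set f := fun u : ℝ => u ^ (s ^ 2) * exp (-u ^ 2 / 2)
  set M := (s ^ 2 / exp 1) ^ (s ^ 2 / 2)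
  have hf : IntegrableOn f (Ioi 0) := by
    simpa using integrableOn_rpow_mul_exp_neg_mul_sq_div_two (R := 1) (by nlinarith) one_ne_zero
  have hnear : Ioc (s - 1 / 2) s ⊆ Ioi 0 := fun u hu => by simp only [mem_Ioi]; linarith [hu.1]
  have hfar : Ioi s ⊆ Ioi 0 := Ioi_subset_Ioi hs.le
  have hsplit : (∫ u in Ioc (s - 1 / 2) s, f u) + ∫ u in Ioi s, f u ≤ ∫ u in Ioi 0, f u := by
    rw [← setIntegral_union (Ioc_disjoint_Ioi le_rfl) measurableSet_Ioi
      (hf.mono_set hnear) (hf.mono_set hfar)]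
    refine setIntegral_mono_set hf ?_ (union_subset hnear hfar).eventuallyLE
    filter_upwards [ae_restrict_mem measurableSet_Ioi] with u (hu : 0 < u)
    exact mul_nonneg (rpow_nonneg hu.le _) (exp_pos _).le
  have hnear_ge : M * exp (-(5 / 8)) * (1 / 2) ≤ ∫ u in Ioc (s - 1 / 2) s, f u := by
    have hvol : volume.real (Ioc (s - 1 / 2) s) = 1 / 2 := by
      rw [Real.volume_real_Ioc_of_le (by linarith)]; ring
    calc M * exp (-(5 / 8)) * (1 / 2) = ∫ _ in Ioc (s - 1 / 2) s, M * exp (-(5 / 8)) := by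
          rw [setIntegral_const, hvol, smul_eq_mul, mul_comm]
      _ ≤ ∫ u in Ioc (s - 1 / 2) s, f u :=
          setIntegral_mono_on (integrableOn_const measure_Ioc_lt_top.ne) (hf.mono_set hnear)
            measurableSet_Ioc fun u hu => mul_exp_le_rpow_mul_exp_neg_sq_div_two hs (hnear hu)
              (le_sq_mul_log_div_of_sub_half_le hs1 hu.1.le hu.2)
  have hfar_ge : M * (√π / 2) ≤ ∫ u in Ioi s, f u := by
    rw [← integral_Ioi_exp_neg_sq_sub s, ← integral_const_mul]
    refine setIntegral_mono_on ?_ (hf.mono_set hfar) measurableSet_Ioi fun u hu => ?_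
    · exact (((integrable_exp_neg_mul_sq one_pos).comp_sub_right s).const_mul
        M).integrableOn.congr_fun (fun u _ => by simp) measurableSet_Ioi
    · exact mul_exp_le_rpow_mul_exp_neg_sq_div_two hs (hfar hu)
        (le_sq_mul_log_div_of_le hs (le_of_lt hu))
  have hpi : 1.7 ≤ √π := le_sqrt_of_sq_le (by nlinarith [pi_gt_three])
  have hexp : 0.3 ≤ exp (-(5 / 8)) := by
    rw [exp_neg, le_inv_comm₀ (by norm_num) (exp_pos _)]
    linarith [exp_le_exp.2 (by norm_num : (5 / 8 : ℝ) ≤ 1), exp_one_lt_d9]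
  calc M = M * 1 := (mul_one M).symm
    _ ≤ M * (exp (-(5 / 8)) * (1 / 2) + √π / 2) := by gcongr; linarith
    _ = M * exp (-(5 / 8)) * (1 / 2) + M * (√π / 2) := by ring
    _ ≤ (∫ u in Ioc (s - 1 / 2) s, f u) + ∫ u in Ioi s, f u := add_le_add hnear_ge hfar_ge
    _ ≤ ∫ u in Ioi 0, f u := hsplit

lemma integral_rpow_mul_exp_neg_mul_sq_div_two {p R : ℝ} (hR : 0 < R) :
    ∫ t in Ioi 0, t ^ p * exp (-(R * t) ^ 2 / 2) =
      R ^ (-(p + 1)) * ∫ u in Ioi 0, u ^ p * exp (-u ^ 2 / 2) := by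
  have h := integral_comp_mul_left_Ioi (fun u => u ^ p * exp (-u ^ 2 / 2)) 0 hR
  rw [mul_zero, smul_eq_mul] at h
  rw [neg_add, rpow_add hR, rpow_neg_one, mul_assoc, ← h, ← integral_const_mul]
  refine setIntegral_congr_fun measurableSet_Ioi fun t (ht : 0 < t) => ?_
  rw [mul_rpow hR.le ht.le, rpow_neg hR.le]
  field_simp [(rpow_pos_of_pos hR p).ne']

lemma rpow_div_two_pi_exp_mul_rpow_le_integral {p R : ℝ} (hp : 1 ≤ p) (hR : 0 < R) :
    (p / (2 * π * exp 1)) ^ (p / 2) * R ^ (-(p + 1)) ≤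
      ∫ t in Ioi 0, (2 * π) ^ (-p / 2) * (t ^ p * exp (-(R * t) ^ 2 / 2)) := by
  have hsplit :
      (p / (2 * π * exp 1)) ^ (p / 2) = (2 * π) ^ (-p / 2) * (p / exp 1) ^ (p / 2) := by
    rw [mul_comm (2 * π), ← div_div, div_rpow (by positivity) (by positivity), neg_div,
      rpow_neg (by positivity), div_eq_inv_mul]
  rw [integral_const_mul, integral_rpow_mul_exp_neg_mul_sq_div_two hR, hsplit, mul_assoc,
    mul_comm (R ^ _)]
  gcongr
  exact rpow_div_exp_le_integral_rpow_mul_exp hp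

lemma integrable_exp_neg_mul_sq_norm {V : Type*} [NormedAddCommGroup V] [InnerProductSpace ℝ V]
    [FiniteDimensional ℝ V] [MeasurableSpace V] [BorelSpace V] {b : ℝ} (hb : 0 < b) :
    Integrable (fun v : V => exp (-b * ‖v‖ ^ 2)) := by
  refine (GaussianFourier.integrable_cexp_neg_mul_sq_norm_add (V := V)
    (b := (b : ℂ)) (by simpa using hb) 0 0).norm.congr (ae_of_all _ fun v => ?_)
  simp only [inner_zero_left, Complex.ofReal_zero, mul_zero, add_zero, Complex.norm_exp]
  norm_cast

lemma self_mul_exp_neg_sq_div_two_le (x : ℝ) :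
    x * exp (-x ^ 2 / 2) ≤ exp (-(1 / 4) * x ^ 2) := by
  have hx : x ≤ exp (x ^ 2 / 4) := by
    nlinarith [add_one_le_exp (x ^ 2 / 4), sq_nonneg (x / 2 - 1)]
  calc x * exp (-x ^ 2 / 2) ≤ exp (x ^ 2 / 4) * exp (-x ^ 2 / 2) := by gcongr
    _ = exp (-(1 / 4) * x ^ 2) := by rw [← exp_add]; ring_nf

section GaussianMeasure

variable {n : ℕ}

lemma gaussianMeasure_eq_withDensity : gaussianMeasure n = volume.withDensity
    (fun x => ENNReal.ofReal ((2 * π) ^ (-(n : ℝ) / 2) * exp (-‖x‖ ^ 2 / 2))) := rfl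

lemma integrable_norm_gaussianMeasure :
    Integrable (fun x : EuclideanSpace ℝ (Fin n) => ‖x‖) (gaussianMeasure n) := by
  rw [gaussianMeasure_eq_withDensity, integrable_withDensity_iff (by fun_prop)
    (ae_of_all _ fun _ => ENNReal.ofReal_lt_top)]
  refine ((integrable_exp_neg_mul_sq_norm (V := EuclideanSpace ℝ (Fin n)) (b := 1 / 4)
    (by norm_num)).const_mul ((2 * π) ^ (-(n : ℝ) / 2))).mono' (by fun_prop)
    (ae_of_all _ fun x => ?_)
  rw [ENNReal.toReal_ofReal (by positivity), norm_of_nonneg (by positivity), mul_left_comm]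
  gcongr
  exact self_mul_exp_neg_sq_div_two_le ‖x‖

lemma integrable_gauge_gaussianMeasure {K : Set (EuclideanSpace ℝ (Fin n))}
    (hK : Convex ℝ K) (hK₀ : K ∈ 𝓝 0) : Integrable (gauge K) (gaussianMeasure n) := by
  obtain ⟨r, hr, hrK⟩ := Metric.mem_nhds_iff.mp hK₀
  refine (integrable_norm_gaussianMeasure.div_const r).mono'
    (continuous_gauge hK hK₀).aestronglyMeasurable (ae_of_all _ fun x => ?_)
  rw [norm_of_nonneg (gauge_nonneg _), ← gauge_ball hr.le]
  exact gauge_mono (absorbent_ball_zero hr) hrK x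

lemma ofReal_mul_volume_le_gaussianMeasure {S : Set (EuclideanSpace ℝ (Fin n))} {r : ℝ}
    (hS : S ⊆ Metric.closedBall 0 r) :
    ENNReal.ofReal ((2 * π) ^ (-(n : ℝ) / 2) * exp (-r ^ 2 / 2)) * volume S ≤
      gaussianMeasure n S := by
  rw [gaussianMeasure_eq_withDensity, withDensity_apply', ← setLIntegral_const]
  refine setLIntegral_mono (by fun_prop) fun x hx => ENNReal.ofReal_le_ofReal ?_
  have hx : ‖x‖ ≤ r := mem_closedBall_zero_iff.mp (hS hx)
  have : ‖x‖ ^ 2 ≤ r ^ 2 := pow_le_pow_left₀ (norm_nonneg x) hx 2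
  gcongr

lemma ofReal_mul_volume_le_gaussianMeasure_smul {S : Set (EuclideanSpace ℝ (Fin n))} {R t : ℝ}
    (hS : S ⊆ Metric.closedBall 0 R) (ht : 0 < t) :
    ENNReal.ofReal ((2 * π) ^ (-(n : ℝ) / 2) * (t ^ (n : ℝ) * exp (-(R * t) ^ 2 / 2))) *
      volume S ≤ gaussianMeasure n (t • S) := by
  have htS : t • S ⊆ Metric.closedBall 0 (R * t) := by
    rintro _ ⟨x, hx, rfl⟩
    rw [mem_closedBall_zero_iff, norm_smul, norm_of_nonneg ht.le, mul_comm]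
    exact mul_le_mul_of_nonneg_right (mem_closedBall_zero_iff.mp (hS hx)) ht.le
  refine le_trans (le_of_eq ?_) (ofReal_mul_volume_le_gaussianMeasure htS)
  rw [Measure.addHaar_smul, finrank_euclideanSpace_fin, abs_of_pos (pow_pos ht n),
    ← mul_assoc (ENNReal.ofReal _), ← ENNReal.ofReal_mul (by positivity), rpow_natCast]
  ring_nf

end GaussianMeasure

lemma lintegral_measure_le_diff_lt_eq_ofReal_integral_sub {α : Type*} [MeasurableSpace α]
    {μ : Measure α} {f g : α → ℝ} (hg₀ : 0 ≤ g) (hgf : g ≤ f) (hf : Integrable f μ)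
    (hg : Integrable g μ) :
    ∫⁻ t in Ioi 0, μ ({x | t ≤ f x} \ {x | t < g x}) =
      ENNReal.ofReal (∫ x, f x ∂μ - ∫ x, g x ∂μ) := by
  have hf₀ : 0 ≤ f := hg₀.trans hgf
  have hlt_le : ∀ t, {x | t < g x} ⊆ {x | t ≤ f x} := fun t x hx => hx.le.trans (hgf x)
  have hF := lintegral_eq_lintegral_meas_le μ (ae_of_all _ hf₀) hf.aemeasurable
  have hG := lintegral_eq_lintegral_meas_lt μ (ae_of_all _ hg₀) hg.aemeasurable
  have hG_fin : ∫⁻ t in Ioi 0, μ {x | t < g x} ≠ ∞ := hG ▸ hg.lintegral_lt_top.ne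
  have hGF : ∫⁻ x, ENNReal.ofReal (g x) ∂μ ≤ ∫⁻ x, ENNReal.ofReal (f x) ∂μ :=
    lintegral_mono fun x => ENNReal.ofReal_le_ofReal (hgf x)
  calc ∫⁻ t in Ioi 0, μ ({x | t ≤ f x} \ {x | t < g x})
      = ∫⁻ t in Ioi 0, μ {x | t ≤ f x} - μ {x | t < g x} :=
        setLIntegral_congr_fun measurableSet_Ioi fun t (ht : 0 < t) => measure_sdiff (hlt_le t)
          (nullMeasurableSet_lt aemeasurable_const hg.aemeasurable) (hg.measure_gt_lt_top ht).ne
    _ = (∫⁻ t in Ioi 0, μ {x | t ≤ f x}) - ∫⁻ t in Ioi 0, μ {x | t < g x} :=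
        lintegral_sub (Antitone.measurable fun s t hst => measure_mono fun x hx =>
          lt_of_le_of_lt hst hx) hG_fin (ae_of_all _ fun t => measure_mono (hlt_le t))
    _ = ENNReal.ofReal (∫ x, f x ∂μ - ∫ x, g x ∂μ) := by
        rw [← hF, ← hG,
          integral_eq_lintegral_of_nonneg_ae (ae_of_all _ hf₀) hf.aestronglyMeasurable,
          integral_eq_lintegral_of_nonneg_ae (ae_of_all _ hg₀) hg.aestronglyMeasurable,
          ← ENNReal.toReal_sub_of_le hGF hf.lintegral_lt_top.ne,
          ENNReal.ofReal_toReal (ENNReal.sub_ne_top hf.lintegral_lt_top.ne)]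

lemma smul_diff_subset_setOf_gauge {E : Type*} [AddCommGroup E] [Module ℝ E] {K C : Set E}
    (hK : Convex ℝ K) (hK₀ : (0 : E) ∈ K) (hKabs : Absorbent ℝ K) {t : ℝ} (ht : 0 < t) :
    t • (C \ K) ⊆ {x | t ≤ gauge K x} \ {x | t < gauge C x} := by
  -- with `≤` for `K` and `<` for `C` no null boundary has to be discarded
  rintro _ ⟨x, ⟨hxC, hxK⟩, rfl⟩
  refine ⟨?_, (gauge_le_of_mem ht.le (smul_mem_smul_set hxC)).not_gt⟩
  rw [mem_ofPred_eq, gauge_smul_of_nonneg ht.le, smul_eq_mul]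
  by_contra! hlt
  exact hxK (setOfPred_gauge_lt_one_subset_self hK hK₀ hKabs
    ((mul_lt_iff_lt_one_right ht).mp hlt))

lemma Convex.mem_nhds_zero_of_neg_mem {E : Type*} [AddCommGroup E] [Module ℝ E]
    [TopologicalSpace E] [IsTopologicalAddGroup E] [ContinuousSMul ℝ E] {K : Set E}
    (hK : Convex ℝ K) (hint : (interior K).Nonempty) (hneg : ∀ x ∈ K, -x ∈ K) : K ∈ 𝓝 0 := by
  obtain ⟨x, hx⟩ := hint
  have h := hK.combo_interior_self_mem_interior hx (hneg x (interior_subset hx))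
    (by norm_num : (0 : ℝ) < 1 / 2) (by norm_num : (0 : ℝ) ≤ 1 / 2) (by norm_num)
  rw [smul_neg, add_neg_cancel] at h
  exact mem_interior_iff_mem_nhds.mp h

lemma integral_mul_volume_le_ellNorm_sub {n : ℕ} {R : ℝ} {K C : Set (EuclideanSpace ℝ (Fin n))}
    (hR : 0 < R) (hK : Convex ℝ K) (hK₀ : K ∈ 𝓝 0) (hC : Convex ℝ C) (hKC : K ⊆ C)
    (hCR : C ⊆ Metric.closedBall 0 R) :
    (∫ t in Ioi 0, (2 * π) ^ (-(n : ℝ) / 2) * (t ^ (n : ℝ) * exp (-(R * t) ^ 2 / 2))) *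
      (volume (C \ K)).toReal ≤ ellNorm K - ellNorm C := by
  have hKabs : Absorbent ℝ K := absorbent_nhds_zero hK₀
  have hKi := integrable_gauge_gaussianMeasure hK hK₀
  have hCi := integrable_gauge_gaussianMeasure hC (mem_of_superset hK₀ hKC)
  have hCK : gauge C ≤ gauge K := gauge_mono hKabs hKC
  set φ : ℝ → ℝ := fun t => (2 * π) ^ (-(n : ℝ) / 2) * (t ^ (n : ℝ) * exp (-(R * t) ^ 2 / 2))
  have hφ_nonneg : ∀ t ∈ Ioi (0 : ℝ), 0 ≤ φ t := fun t (ht : 0 < t) => by positivity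
  have hφ_int : IntegrableOn φ (Ioi 0) :=
    (integrableOn_rpow_mul_exp_neg_mul_sq_div_two (by linarith) hR.ne').const_mul _
  have hV : volume (C \ K) ≠ ∞ :=
    ((measure_mono (sdiff_subset.trans hCR)).trans_lt measure_closedBall_lt_top).ne
  have hslices : ENNReal.ofReal (∫ t in Ioi 0, φ t) * volume (C \ K) ≤
      ENNReal.ofReal (ellNorm K - ellNorm C) := by
    rw [ellNorm, ellNorm, ← lintegral_measure_le_diff_lt_eq_ofReal_integral_sub
      (fun _ => gauge_nonneg _) hCK hKi hCi, ofReal_integral_eq_lintegral_ofReal hφ_int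
      ((ae_restrict_iff' measurableSet_Ioi).2 (ae_of_all _ hφ_nonneg)),
      ← lintegral_mul_const' _ _ hV]
    refine setLIntegral_mono' measurableSet_Ioi fun t (ht : 0 < t) => ?_
    exact (ofReal_mul_volume_le_gaussianMeasure_smul (sdiff_subset.trans hCR) ht).trans
      (measure_mono (smul_diff_subset_setOf_gauge hK (mem_of_mem_nhds hK₀) hKabs ht))
  rw [← ENNReal.toReal_ofReal (setIntegral_nonneg measurableSet_Ioi hφ_nonneg),
    ← ENNReal.toReal_mul]
  exact ENNReal.toReal_le_of_le_ofReal (sub_nonneg.2 (integral_mono hCi hKi hCK)) hslices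

theorem ell_difference_lower_bound_general (n : ℕ) (hn : 2 ≤ n) (R : ℝ) (hR : 0 < R)
    (K C : Set (EuclideanSpace ℝ (Fin n)))
    (hKconv : Convex ℝ K) (hKint : (interior K).Nonempty)
    (hKsymm : ∀ x ∈ K, -x ∈ K)
    (hCconv : Convex ℝ C)
    (hKC : K ⊆ C) (hCR : C ⊆ Metric.closedBall 0 R) :
    ((n : ℝ) / (2 * Real.pi * Real.exp 1)) ^ ((n : ℝ) / 2) * R ^ (-(n + 1 : ℝ)) *
        (volume (C \ K)).toReal ≤ ellNorm K - ellNorm C := by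
  have hK₀ : K ∈ 𝓝 0 := hKconv.mem_nhds_zero_of_neg_mem hKint hKsymm
  have hn₁ : (1 : ℝ) ≤ n := by exact_mod_cast (by omega : 1 ≤ n)
  exact (mul_le_mul_of_nonneg_right (rpow_div_two_pi_exp_mul_rpow_le_integral hn₁ hR)
    ENNReal.toReal_nonneg).trans (integral_mul_volume_le_ellNorm_sub hR hKconv hK₀ hCconv hKC hCR)

/-- If `K ⊆ C ⊆ R B^n_2` are origin-symmetric convex bodies, then
`ℓ(K) - ℓ(C) ≥ (n/(2πe))^{n/2} R^{-(n+1)} V(C \ K)`. -/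
theorem ell_difference_lower_bound (n : ℕ) (hn : 2 ≤ n) (R : ℝ) (hR : 0 < R)
    (K C : Set (EuclideanSpace ℝ (Fin n)))
    (hKconv : Convex ℝ K) (hKcomp : IsCompact K) (hKint : (interior K).Nonempty)
    (hKsymm : ∀ x ∈ K, -x ∈ K)
    (hCconv : Convex ℝ C) (hCcomp : IsCompact C) (hCint : (interior C).Nonempty)
    (hCsymm : ∀ x ∈ C, -x ∈ C)
    (hKC : K ⊆ C) (hCR : C ⊆ Metric.closedBall 0 R) :
    ((n : ℝ) / (2 * Real.pi * Real.exp 1)) ^ ((n : ℝ) / 2) * R ^ (-(n + 1 : ℝ)) *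
        (volume (C \ K)).toReal ≤ ellNorm K - ellNorm C :=
  ell_difference_lower_bound_general n hn R hR K C hKconv hKint hKsymm hCconv hKC hCR
end

section
/- (Ball–Barthe inequality) If u_1,...,u_k ∈ S^{n-1} and c_1,...,c_k > 0 satisfy ∑_{i=1}^k c_i u_i ⊗ u_i = Id_n, then for any t_1,...,t_k > 0, det(∑_{i=1}^k t_i c_i u_i ⊗ u_i) ≥ ∏_{i=1}^k t_i^{c_i}. -/
/-!
Expanding the determinant multilinearly in its rows and symmetrising over permutations gives a
Cauchy–Binet formula over maps `f : [n] → [k]`: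
`n! · det (∑ aᵢ uᵢ ⊗ uᵢ) = ∑_f (∏_j a_{f j}) · det (U_f)²`, where `U_f` has rows `u_{f j}`.
For `a = c` the weights `w_f = (∏_j c_{f j}) det (U_f)² / n!` are nonnegative and sum to `det Id = 1`.
Doubling `cᵢ` turns the left side into `det (Id + cᵢ uᵢ ⊗ uᵢ) = 1 + cᵢ`, and since only injective `f`
carry weight this gives `∑_f w_f · #f⁻¹(i) = cᵢ`. Hence, by weighted AM–GM,
`det (∑ tᵢ cᵢ uᵢ ⊗ uᵢ) = ∑_f w_f ∏_j t_{f j} ≥ ∏_f (∏_j t_{f j}) ^ w_f = ∏ᵢ tᵢ ^ cᵢ`.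
-/

open Matrix Finset

namespace Matrix

variable {R : Type*} [CommRing R] {n ι : Type*} [Fintype n] [DecidableEq n] [Fintype ι]

theorem det_one_add_vecMulVec (u v : n → R) : det (1 + vecMulVec u v) = 1 + v ⬝ᵥ u := by
  rw [vecMulVec_eq Unit, det_one_add_replicateCol_mul_replicateRow]

theorem det_sum_smul_vecMulVec (a : ι → R) (u : ι → n → R) :
    det (∑ i, a i • vecMulVec (u i) (u i)) =
      ∑ f : n → ι, (∏ j, a (f j) * u (f j) j) * det ((of u).submatrix f id) := by
  have hrows : ∑ i, a i • vecMulVec (u i) (u i) = of fun j => ∑ i, (a i * u i j) • u i := by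
    ext j l
    simp [sum_apply, vecMulVec_apply, mul_assoc]
  rw [hrows]
  change detRowAlternating.toMultilinearMap (fun j => ∑ i, (a i * u i j) • u i) = _
  rw [MultilinearMap.map_sum]
  refine sum_congr rfl fun f _ => ?_
  rw [MultilinearMap.map_smul_univ]
  rfl

theorem factorial_mul_det_sum_smul_vecMulVec (a : ι → R) (u : ι → n → R) :
    (Fintype.card n).factorial * det (∑ i, a i • vecMulVec (u i) (u i)) =
      ∑ f : n → ι, (∏ j, a (f j)) * det ((of u).submatrix f id) ^ 2 := by
  set D : (n → ι) → R := fun f => det ((of u).submatrix f id)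
  have hreindex (σ : Equiv.Perm n) : det (∑ i, a i • vecMulVec (u i) (u i)) =
      ∑ f : n → ι, (∏ j, a (f j)) * D f * (Equiv.Perm.sign σ * ∏ j, u (f (σ j)) j) := by
    rw [det_sum_smul_vecMulVec, ← (Equiv.arrowCongr σ.symm (Equiv.refl ι)).sum_comp]
    refine sum_congr rfl fun f _ => ?_
    have hD : D (f ∘ σ) = Equiv.Perm.sign σ * D f := by
      rw [← det_permute σ, submatrix_submatrix]
      rfl
    change (∏ j, a (f (σ j)) * u (f (σ j)) j) * D (f ∘ σ) = _
    rw [prod_mul_distrib, hD, Equiv.prod_comp σ (fun j => a (f j))]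
    ring
  calc (Fintype.card n).factorial * det (∑ i, a i • vecMulVec (u i) (u i))
      = ∑ σ : Equiv.Perm n, det (∑ i, a i • vecMulVec (u i) (u i)) := by
        simp [Fintype.card_perm]
    _ = ∑ σ : Equiv.Perm n, ∑ f : n → ι,
          (∏ j, a (f j)) * D f * (Equiv.Perm.sign σ * ∏ j, u (f (σ j)) j) :=
        sum_congr rfl fun σ _ => hreindex σ
    _ = ∑ f : n → ι, (∏ j, a (f j)) * D f *
          ∑ σ : Equiv.Perm n, Equiv.Perm.sign σ * ∏ j, u (f (σ j)) j := by
        rw [sum_comm]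
        simp only [mul_sum]
    _ = ∑ f : n → ι, (∏ j, a (f j)) * D f ^ 2 := by
        refine sum_congr rfl fun f _ => ?_
        rw [sq, ← mul_assoc]
        congr 1
        exact (det_apply' ((of u).submatrix f id)).symm

end Matrix

section IsotropicWeights

variable {n ι : Type*} [Fintype n] [DecidableEq n]

noncomputable def isotropicWeight (u : ι → n → ℝ) (c : ι → ℝ) (f : n → ι) : ℝ :=
  (∏ j, c (f j)) * det ((of u).submatrix f id) ^ 2 / (Fintype.card n).factorial

theorem isotropicWeight_nonneg (u : ι → n → ℝ) {c : ι → ℝ} (hc : ∀ i, 0 ≤ c i) (f : n → ι) :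
    0 ≤ isotropicWeight u c f := by
  unfold isotropicWeight
  have := prod_nonneg fun j (_ : j ∈ univ) => hc (f j)
  positivity

theorem isotropicWeight_eq_zero_of_not_injective (u : ι → n → ℝ) (c : ι → ℝ) {f : n → ι}
    (hf : ¬ f.Injective) : isotropicWeight u c f = 0 := by
  obtain ⟨j, j', hfj, hne⟩ := Function.not_injective_iff.mp hf
  have : det ((of u).submatrix f id) = 0 := det_zero_of_row_eq hne (by ext; simp [hfj])
  simp [isotropicWeight, this]

variable [Fintype ι]

theorem det_sum_mul_smul_vecMulVec (u : ι → n → ℝ) (c a : ι → ℝ) :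
    det (∑ i, (a i * c i) • vecMulVec (u i) (u i)) =
      ∑ f : n → ι, isotropicWeight u c f * ∏ j, a (f j) := by
  have hfact : ((Fintype.card n).factorial : ℝ) ≠ 0 := by positivity
  rw [← mul_right_inj' hfact, factorial_mul_det_sum_smul_vecMulVec, mul_sum]
  refine sum_congr rfl fun f _ => ?_
  rw [isotropicWeight, prod_mul_distrib]
  field_simp

theorem sum_isotropicWeight {u : ι → n → ℝ} {c : ι → ℝ}
    (hiso : ∑ i, c i • vecMulVec (u i) (u i) = 1) : ∑ f : n → ι, isotropicWeight u c f = 1 := by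
  simpa [hiso] using (det_sum_mul_smul_vecMulVec u c 1).symm

theorem sum_isotropicWeight_mul_card_fiber [DecidableEq ι] {u : ι → n → ℝ} {c : ι → ℝ}
    (hu : ∀ i, ∑ j, u i j ^ 2 = 1) (hiso : ∑ i, c i • vecMulVec (u i) (u i) = 1) (i : ι) :
    ∑ f : n → ι, isotropicWeight u c f * #{j | f j = i} = c i := by
  have hdouble : ∑ f : n → ι, isotropicWeight u c f * 2 ^ #{j | f j = i} = 1 + c i := by
    have hmat : ∑ l, ((if l = i then 2 else 1) * c l) • vecMulVec (u l) (u l) =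
        1 + vecMulVec (c i • u i) (u i) := by
      rw [← hiso, smul_vecMulVec, ← Fintype.sum_ite_eq' i fun l => c l • vecMulVec (u l) (u l),
        ← sum_add_distrib]
      refine sum_congr rfl fun l _ => ?_
      split_ifs <;> module
    have hprod (f : n → ι) : ∏ j, (if f j = i then (2 : ℝ) else 1) = 2 ^ #{j | f j = i} := by
      rw [prod_ite, prod_const, prod_const, one_pow, mul_one]
    have h := det_sum_mul_smul_vecMulVec u c fun l => if l = i then 2 else 1
    rw [hmat, det_one_add_vecMulVec, dotProduct_smul, smul_eq_mul] at h
    simpa [dotProduct, ← sq, hu, hprod] using h.symm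
  have hcard (f : n → ι) : isotropicWeight u c f * #{j | f j = i} =
      isotropicWeight u c f * 2 ^ #{j | f j = i} - isotropicWeight u c f := by
    by_cases hf : f.Injective
    · have : #{j | f j = i} ≤ 1 := card_le_one.mpr fun j hj j' hj' => hf (by simp_all)
      interval_cases #{j | f j = i} <;> push_cast <;> ring
    · simp [isotropicWeight_eq_zero_of_not_injective u c hf]
  rw [sum_congr rfl fun f _ => hcard f, sum_sub_distrib, hdouble, sum_isotropicWeight hiso]
  ring

end IsotropicWeights

theorem Real.prod_comp_rpow {n ι : Type*} [Fintype n] [Fintype ι] [DecidableEq ι] {t : ι → ℝ}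
    (ht : ∀ i, 0 ≤ t i) (f : n → ι) (x : ℝ) :
    (∏ j, t (f j)) ^ x = ∏ i, t i ^ (x * #{j | f j = i}) := by
  rw [← prod_fiberwise' univ f t, ← Real.finsetProd_rpow _ _ fun i _ => prod_nonneg fun _ _ => ht i]
  refine prod_congr rfl fun i _ => ?_
  rw [prod_const, ← Real.rpow_natCast, ← Real.rpow_mul (ht i), mul_comm]

/-- Ball–Barthe inequality: if unit vectors `u i` and weights `c i > 0` satisfy
`∑ i, c i • u i ⊗ u i = Id_n`, then for all `t i > 0`,
`det (∑ i, t i c i • u i ⊗ u i) ≥ ∏ i, t i ^ (c i)`. -/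
theorem ball_barthe (n k : ℕ) (u : Fin k → Fin n → ℝ) (c t : Fin k → ℝ)
    (hu : ∀ i, ∑ j, u i j ^ 2 = 1) (hc : ∀ i, 0 < c i) (ht : ∀ i, 0 < t i)
    (hiso : ∑ i, c i • vecMulVec (u i) (u i) = (1 : Matrix (Fin n) (Fin n) ℝ)) :
    ∏ i, t i ^ c i ≤ Matrix.det (∑ i, (t i * c i) • vecMulVec (u i) (u i)) := by
  set w := isotropicWeight u c
  calc ∏ i, t i ^ c i
      = ∏ i, ∏ f : Fin n → Fin k, t i ^ (w f * #{j | f j = i}) := by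
        simp only [← Real.rpow_sum_of_pos (ht _), w, sum_isotropicWeight_mul_card_fiber hu hiso]
    _ = ∏ f : Fin n → Fin k, (∏ j, t (f j)) ^ w f := by
        rw [prod_comm]
        simp only [Real.prod_comp_rpow fun i => (ht i).le]
    _ ≤ ∑ f : Fin n → Fin k, w f * ∏ j, t (f j) :=
        Real.geom_mean_le_arith_mean_weighted _ _ _
          (fun f _ => isotropicWeight_nonneg u (fun i => (hc i).le) f) (sum_isotropicWeight hiso)
          fun f _ => prod_nonneg fun j _ => (ht (f j)).le
    _ = det (∑ i, (t i * c i) • vecMulVec (u i) (u i)) :=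
        (det_sum_mul_smul_vecMulVec u c t).symm
end

section
/- Let η ∈ (0, π/8) and let u, u' ∈ S¹ with |⟨u,u'⟩| ≤ cos η. If v ∈ S¹ satisfies cos(3π/8) ≤ |⟨v, (u−u')/‖u−u'‖⟩| ≤ cos(π/8) and cos(3π/8) ≤ |⟨v, (u+u')/‖u+u'‖⟩| ≤ cos(π/8), then | |⟨v,u⟩| − |⟨v,u'⟩| | ≥ η/5. -/
/-!
For unit vectors `u, u'` with `|⟪u, u'⟫| ≤ cos η`, both `u - u'` and `u + u'` have length at
least `2 sin (η / 2)`. The angle hypotheses on `v` then give `|⟪v, u ∓ u'⟫| ≥ 2 sin (η / 2) cos (3π/8)`,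
which is at least `η / 5` by Jordan's inequality and `sin (π/8) > π/10`. Finally
`||a| - |b||` is either `|a - b|` or `|a + b|`.
-/

open scoped RealInnerProductSpace

open Real

lemma le_abs_abs_sub_abs {a b c : ℝ} (hsub : c ≤ |a - b|) (hadd : c ≤ |a + b|) :
    c ≤ |(|a| - |b|)| := by
  rcases le_total 0 a with ha | ha <;> rcases le_total 0 b with hb | hb
  · rwa [abs_of_nonneg ha, abs_of_nonneg hb]
  · rwa [abs_of_nonneg ha, abs_of_nonpos hb, sub_neg_eq_add]
  · rwa [abs_of_nonpos ha, abs_of_nonneg hb, ← neg_add', abs_neg]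
  · rwa [abs_of_nonpos ha, abs_of_nonpos hb, neg_sub_neg, abs_sub_comm]

lemma pi_div_ten_lt_cos_three_pi_div_eight : π / 10 < cos (3 * π / 8) := by
  rw [show 3 * π / 8 = π / 2 - π / 8 by ring, cos_pi_div_two_sub]
  have htaylor := sin_gt_sub_cube (x := π / 8) (by positivity)
  have hsq : π ^ 2 < 16 := by nlinarith [pi_pos, pi_lt_four]
  have hcube : π ^ 3 < 16 * π := by
    rw [pow_succ]
    exact mul_lt_mul_of_pos_right hsq pi_pos
  linarith [pi_pos]

lemma div_five_le_two_mul_sin_half_mul_cos {η : ℝ} (hη₀ : 0 ≤ η) (hηπ : η ≤ π) :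
    η / 5 ≤ 2 * sin (η / 2) * cos (3 * π / 8) := by
  have hjordan : 2 / π * (η / 2) ≤ sin (η / 2) := mul_le_sin (by positivity) (by linarith)
  have hcos := pi_div_ten_lt_cos_three_pi_div_eight
  have hsin : 0 ≤ sin (η / 2) := sin_nonneg_of_nonneg_of_le_pi (by positivity) (by linarith)
  calc η / 5 = 2 * (2 / π * (η / 2)) * (π / 10) := by field_simp; ring
    _ ≤ 2 * sin (η / 2) * cos (3 * π / 8) := by gcongr

section InnerProductSpace

variable {E : Type*} [NormedAddCommGroup E] [InnerProductSpace ℝ E]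

lemma two_mul_sin_half_le_norm_sub {u u' : E} {η : ℝ} (hu : ‖u‖ = 1) (hu' : ‖u'‖ = 1)
    (hinner : ⟪u, u'⟫ ≤ cos η) : 2 * sin (η / 2) ≤ ‖u - u'‖ := by
  refine le_of_sq_le_sq ?_ (norm_nonneg _)
  have hhalf := sin_sq_eq_half_sub (η / 2)
  rw [show 2 * (η / 2) = η by ring] at hhalf
  rw [norm_sub_sq_real, hu, hu', mul_pow, hhalf]
  linarith

lemma two_mul_sin_half_le_norm_add {u u' : E} {η : ℝ} (hu : ‖u‖ = 1) (hu' : ‖u'‖ = 1)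
    (hinner : -⟪u, u'⟫ ≤ cos η) : 2 * sin (η / 2) ≤ ‖u + u'‖ := by
  rw [← sub_neg_eq_add]
  exact two_mul_sin_half_le_norm_sub hu (by rwa [norm_neg]) (by rwa [inner_neg_right])

lemma norm_mul_le_abs_inner_of_le_abs_inner_normalize {v w : E} {c : ℝ}
    (h : c ≤ |⟪v, ‖w‖⁻¹ • w⟫|) : ‖w‖ * c ≤ |⟪v, w⟫| := by
  rw [real_inner_smul_right, abs_mul, abs_inv, abs_norm] at h
  rcases (norm_nonneg w).eq_or_lt with hw | hw
  · rw [← hw, zero_mul]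
    exact abs_nonneg _
  · exact (le_inv_mul_iff₀ hw).mp h

lemma div_five_le_abs_inner {v w : E} {η : ℝ} (hη₀ : 0 ≤ η) (hηπ : η ≤ π)
    (hw : 2 * sin (η / 2) ≤ ‖w‖) (hangle : cos (3 * π / 8) ≤ |⟪v, ‖w‖⁻¹ • w⟫|) :
    η / 5 ≤ |⟪v, w⟫| :=
  calc η / 5 ≤ 2 * sin (η / 2) * cos (3 * π / 8) := div_five_le_two_mul_sin_half_mul_cos hη₀ hηπ
    _ ≤ ‖w‖ * cos (3 * π / 8) := by
      gcongr
      exact pi_div_ten_lt_cos_three_pi_div_eight.le.trans' (by positivity)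
    _ ≤ |⟪v, w⟫| := norm_mul_le_abs_inner_of_le_abs_inner_normalize hangle

end InnerProductSpace

theorem abs_scalar_product_gap_general (η : ℝ) (hη : 0 < η) (hη' : η < Real.pi / 8)
    (u u' v : EuclideanSpace ℝ (Fin 2))
    (hu : ‖u‖ = 1) (hu' : ‖u'‖ = 1)
    (huu' : |⟪u, u'⟫| ≤ Real.cos η)
    (h1 : Real.cos (3 * Real.pi / 8) ≤ |⟪v, ‖u - u'‖⁻¹ • (u - u')⟫|)
    (h2 : Real.cos (3 * Real.pi / 8) ≤ |⟪v, ‖u + u'‖⁻¹ • (u + u')⟫|) :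
    η / 5 ≤ |(|⟪v, u⟫| - |⟪v, u'⟫|)| := by
  obtain ⟨hlower, hupper⟩ := abs_le.mp huu'
  have hηπ : η ≤ π := by linarith [pi_pos]
  have hsub := div_five_le_abs_inner hη.le hηπ
    (two_mul_sin_half_le_norm_sub hu hu' hupper) h1
  have hadd := div_five_le_abs_inner hη.le hηπ
    (two_mul_sin_half_le_norm_add hu hu' (by linarith)) h2
  rw [inner_sub_right] at hsub
  rw [inner_add_right] at hadd
  exact le_abs_abs_sub_abs hsub hadd

/-- Let `η ∈ (0, π/8)` and `u, u'` unit vectors in the plane with `|⟪u,u'⟫| ≤ cos η`. If a unit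
vector `v` makes an angle between `π/8` and `3π/8` with both `(u-u')/‖u-u'‖` and
`(u+u')/‖u+u'‖`, then `||⟪v,u⟫| - |⟪v,u'⟫|| ≥ η/5`. -/
theorem abs_scalar_product_gap (η : ℝ) (hη : 0 < η) (hη' : η < Real.pi / 8)
    (u u' v : EuclideanSpace ℝ (Fin 2))
    (hu : ‖u‖ = 1) (hu' : ‖u'‖ = 1) (hv : ‖v‖ = 1)
    (huu' : |⟪u, u'⟫| ≤ Real.cos η)
    (h1 : Real.cos (3 * Real.pi / 8) ≤ |⟪v, ‖u - u'‖⁻¹ • (u - u')⟫|)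
    (h1' : |⟪v, ‖u - u'‖⁻¹ • (u - u')⟫| ≤ Real.cos (Real.pi / 8))
    (h2 : Real.cos (3 * Real.pi / 8) ≤ |⟪v, ‖u + u'‖⁻¹ • (u + u')⟫|)
    (h2' : |⟪v, ‖u + u'‖⁻¹ • (u + u')⟫| ≤ Real.cos (Real.pi / 8)) :
    η / 5 ≤ |(|⟪v, u⟫| - |⟪v, u'⟫|)| :=
  abs_scalar_product_gap_general η hη hη' u u' v hu hu' huu' h1 h2
end

section
/- Let ε ∈ (0, 1/2), let e_1,...,e_n be an orthonormal basis of R^n, and let x ∈ conv{e_1,...,e_n}. If the angle ∠(x, e_i) ≥ ε for every i = 1,...,n, then ‖x‖ ≤ 1 − 4^{1−n}·ε. -/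
/-!
Write `x = ∑ i, w i • e i` with `w` in the standard simplex, so that `⟪x, e i⟫ = w i` and
`‖x‖ ^ 2 = ∑ i, w i ^ 2`; the angle condition reads `w i ≤ ‖x‖ * cos ε`. If every weight is at
most `1 / 2`, then `‖x‖ ^ 2 ≤ 1 / 2`. Otherwise, for the largest weight `w a`, the other weights
have `ℓ²`-norm at most their sum `1 - w a`, which forces `‖x‖ * (sin ε + cos ε) ≤ 1`, and
`sin ε + cos ε ≥ 1 + ε / 3`. Either way `‖x‖ ≤ 1 - ε / 4`, which is at most `1 - 4 ^ (1 - n) * ε`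
once `n ≥ 2`; for `n = 1` the only admissible `x` is `e 0`, at angle `0`.
-/

open InnerProductGeometry Set Finset Real
open scoped RealInnerProductSpace

theorem convexHull_range_eq_image_stdSimplex {𝕜 E ι : Type*} [Field 𝕜] [LinearOrder 𝕜]
    [IsStrictOrderedRing 𝕜] [AddCommGroup E] [Module 𝕜 E] [Fintype ι] (v : ι → E) :
    convexHull 𝕜 (range v) = (fun w : ι → 𝕜 ↦ ∑ i, w i • v i) '' stdSimplex 𝕜 ι := by
  classical
  have : (fun w : ι → 𝕜 ↦ ∑ i, w i • v i) = Fintype.linearCombination 𝕜 v :=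
    funext fun w ↦ (Fintype.linearCombination_apply 𝕜 v w).symm
  rw [← convexHull_rangle_single_eq_stdSimplex, this, LinearMap.image_convexHull,
    ← Set.range_comp]
  congr 2
  ext i
  simp only [Function.comp_apply, Fintype.linearCombination_apply_single, one_smul]

theorem Orthonormal.norm_sum_smul_sq {ι E : Type*} [Fintype ι] [NormedAddCommGroup E]
    [InnerProductSpace ℝ E] {v : ι → E} (hv : Orthonormal ℝ v) (w : ι → ℝ) :
    ‖∑ i, w i • v i‖ ^ 2 = ∑ i, w i ^ 2 := by
  rw [← real_inner_self_eq_norm_sq, hv.inner_sum]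
  simp only [conj_trivial, sq]

theorem InnerProductGeometry.inner_le_norm_mul_norm_mul_cos_of_le_angle {E : Type*}
    [NormedAddCommGroup E] [InnerProductSpace ℝ E] {x y : E} {θ : ℝ} (hθ : 0 ≤ θ)
    (h : θ ≤ angle x y) : ⟪x, y⟫ ≤ ‖x‖ * ‖y‖ * cos θ := by
  rw [← cos_angle_mul_norm_mul_norm, mul_comm]
  gcongr
  exact cos_le_cos_of_nonneg_of_le_pi hθ (angle_le_pi x y) h

section stdSimplex

variable {ι : Type*} [Fintype ι] {w : ι → ℝ}

theorem sum_sq_le_of_mem_stdSimplex_of_le (hw : w ∈ stdSimplex ℝ ι) {m : ℝ}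
    (hm : ∀ i, w i ≤ m) : ∑ i, w i ^ 2 ≤ m :=
  calc ∑ i, w i ^ 2 ≤ ∑ i, m * w i :=
        sum_le_sum fun i _ ↦ by rw [sq]; exact mul_le_mul_of_nonneg_right (hm i) (hw.1 i)
    _ = m := by rw [← mul_sum, hw.2, mul_one]

theorem sum_sq_le_sq_add_one_sub_sq_of_mem_stdSimplex (hw : w ∈ stdSimplex ℝ ι) (a : ι) :
    ∑ i, w i ^ 2 ≤ w a ^ 2 + (1 - w a) ^ 2 := by
  classical
  have hrest : ∑ i ∈ Finset.univ.erase a, w i = 1 - w a := by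
    rw [sum_erase_eq_sub (mem_univ a), hw.2]
  rw [← add_sum_erase _ _ (mem_univ a), ← hrest]
  gcongr
  exact sum_sq_le_sq_sum_of_nonneg fun i _ ↦ hw.1 i

end stdSimplex

theorem one_add_div_three_le_sin_add_cos {x : ℝ} (h0 : 0 ≤ x) (h1 : x ≤ 1) :
    1 + x / 3 ≤ sin x + cos x := by
  nlinarith [sin_ge_sub_cube h0, one_sub_sq_div_two_le_cos (x := x), mul_nonneg h0 h0,
    mul_nonneg (mul_nonneg h0 h0) (sub_nonneg.2 h1)]

theorem mul_sin_add_cos_le_one {r u θ : ℝ} (hr : 0 ≤ r) (hr1 : r ≤ 1) (hθ : 0 ≤ sin θ)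
    (hu : 1 / 2 ≤ u) (hur : u ≤ r * cos θ) (hsq : r ^ 2 ≤ u ^ 2 + (1 - u) ^ 2) :
    r * (sin θ + cos θ) ≤ 1 := by
  -- `v ↦ v ^ 2 + (1 - v) ^ 2` is increasing on `[1 / 2, ∞)`
  have hmono : r ^ 2 ≤ (r * cos θ) ^ 2 + (1 - r * cos θ) ^ 2 := by
    nlinarith [mul_nonneg (sub_nonneg.2 hur) (by linarith : 0 ≤ r * cos θ + u - 1)]
  have hsin : (r * sin θ) ^ 2 ≤ (1 - r * cos θ) ^ 2 := by
    nlinarith [sin_sq_add_cos_sq θ]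
  have hc : r * cos θ ≤ 1 := by nlinarith [cos_le_one θ]
  have := (pow_le_pow_iff_left₀ (by positivity) (by linarith) two_ne_zero).1 hsin
  linarith

theorem le_one_sub_div_four_of_mem_stdSimplex {ι : Type*} [Fintype ι] {w : ι → ℝ}
    (hw : w ∈ stdSimplex ℝ ι) {r ε : ℝ} (hr : 0 ≤ r) (hrw : r ^ 2 = ∑ i, w i ^ 2)
    (hε0 : 0 ≤ ε) (hε1 : ε ≤ 1) (hcos : ∀ i, w i ≤ r * cos ε) :
    r ≤ 1 - ε / 4 := by
  have : Nonempty ι := by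
    by_contra h
    simpa [not_nonempty_iff.1 h] using hw.2
  obtain ⟨a, -, ha⟩ := exists_max_image univ w univ_nonempty
  by_cases hsmall : w a ≤ 1 / 2
  · have : r ^ 2 ≤ 1 / 2 := hrw ▸ sum_sq_le_of_mem_stdSimplex_of_le hw fun i ↦
      (ha i (mem_univ i)).trans hsmall
    nlinarith
  · have hr1 : r ≤ 1 := by
      have : r ^ 2 ≤ 1 := hrw ▸ sum_sq_le_of_mem_stdSimplex_of_le hw fun i ↦
        (mem_Icc_of_mem_stdSimplex hw i).2
      nlinarith
    have hsin : 0 ≤ sin ε := sin_nonneg_of_nonneg_of_le_pi hε0 (by linarith [pi_gt_three])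
    have := mul_sin_add_cos_le_one hr hr1 hsin (by linarith) (hcos a)
      (hrw ▸ sum_sq_le_sq_add_one_sub_sq_of_mem_stdSimplex hw a)
    nlinarith [one_add_div_three_le_sin_add_cos hε0 hε1]

theorem Orthonormal.norm_le_one_sub_div_four_of_le_angle {ι E : Type*} [Fintype ι]
    [NormedAddCommGroup E] [InnerProductSpace ℝ E] {e : ι → E} (he : Orthonormal ℝ e) {x : E}
    (hx : x ∈ convexHull ℝ (range e)) {ε : ℝ} (hε0 : 0 ≤ ε) (hε1 : ε ≤ 1)
    (hangle : ∀ i, ε ≤ angle x (e i)) : ‖x‖ ≤ 1 - ε / 4 := by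
  rw [convexHull_range_eq_image_stdSimplex] at hx
  obtain ⟨w, hw, rfl⟩ := hx
  refine le_one_sub_div_four_of_mem_stdSimplex hw (norm_nonneg _) (he.norm_sum_smul_sq w)
    hε0 hε1 fun i ↦ ?_
  have := inner_le_norm_mul_norm_mul_cos_of_le_angle hε0 (hangle i)
  rwa [he.inner_left_fintype, he.norm_eq_one, mul_one] at this

/-- Let `ε ∈ (0, 1/2)`, let `e 1, ..., e n` be an orthonormal basis of `ℝ^n`, and let
`x ∈ conv{e 1, ..., e n}`. If `∠(x, e i) ≥ ε` for all `i`, then `‖x‖ ≤ 1 - 4^{1-n} ε`. -/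
theorem norm_le_of_angles_large (n : ℕ) (ε : ℝ) (hε : 0 < ε) (hε' : ε < 1 / 2)
    (e : Fin n → EuclideanSpace ℝ (Fin n)) (he : Orthonormal ℝ e)
    (x : EuclideanSpace ℝ (Fin n)) (hx : x ∈ convexHull ℝ (Set.range e))
    (hangle : ∀ i, ε ≤ InnerProductGeometry.angle x (e i)) :
    ‖x‖ ≤ 1 - (4 : ℝ) ^ ((1 : ℝ) - n) * ε := by
  obtain rfl | rfl | hn : n = 0 ∨ n = 1 ∨ 2 ≤ n := by omega
  · simp [Set.range_eq_empty e] at hx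
  · rw [Set.range_unique, convexHull_singleton, Set.mem_singleton_iff] at hx
    have := hangle default
    rw [hx, angle_self (he.ne_zero default)] at this
    linarith
  · have hpow : (4 : ℝ) ^ ((1 : ℝ) - n) ≤ 1 / 4 := by
      have : (2 : ℝ) ≤ n := by exact_mod_cast hn
      calc (4 : ℝ) ^ ((1 : ℝ) - n) ≤ 4 ^ (-1 : ℝ) := by gcongr <;> linarith
        _ = 1 / 4 := by norm_num [rpow_neg_one]
    calc ‖x‖ ≤ 1 - ε / 4 :=
          he.norm_le_one_sub_div_four_of_le_angle hx hε.le (by linarith) hangle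
      _ ≤ 1 - (4 : ℝ) ^ ((1 : ℝ) - n) * ε := by nlinarith
end
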